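/- arXiv:0711.0511 — 3 statements merged into one kernel-verified Lean document; each statement's English description precedes it below -/
import Mathlib

section
/- Let u : ℝ → ℝ be of class C³, let a,b,c,d ∈ ℝ satisfy ad − bc = 1, and let x ∈ ℝ with cx + d ≠ 0. Set φ(y) = (ay + b)/(cy + d) and suppose u'(φ(x)) ≠ 0. Then I(u ∘ φ)(x) = I(u)(φ(x)); that is, the third-order expression I is a differential invariant of the SL(2,ℝ)-action (x,u) ↦ ((ax+b)/(cx+d), u) on ℝ². -/
/-!
Write `S(f) = 2 f' f''' - 3 f''²` for the numerator of `I`. The third-order chain rule gives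
`S(u ∘ φ) = (S(u) ∘ φ) φ'⁴ + (u' ∘ φ)² S(φ)`, that is `I(u ∘ φ) = I(u) ∘ φ + I(φ) / (u' ∘ φ)²`.
So `I` is invariant under every `φ` with `S(φ) = 0` (vanishing Schwarzian derivative).
Möbius maps have this property: `φ⁽ⁿ⁺¹⁾(y) = (-c)ⁿ (n+1)! (ad - bc) / (cy + d)ⁿ⁺²`,
and `2 · 1! · 3! = 3 · (2!)²`.
-/

/-- The third-order Schwarzian-type expression
`I(f)(x) = (2 f'(x) f'''(x) − 3 f''(x)²) / (2 f'(x)⁴)`. -/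
noncomputable def invI (f : ℝ → ℝ) (x : ℝ) : ℝ :=
  (2 * deriv f x * iteratedDeriv 3 f x - 3 * (iteratedDeriv 2 f x) ^ 2) /
    (2 * (deriv f x) ^ 4)

open Set

theorem ContDiffOn.hasDerivAt_iteratedDeriv {𝕜 F : Type*} [NontriviallyNormedField 𝕜]
    [NormedAddCommGroup F] [NormedSpace 𝕜 F] {f : 𝕜 → F} {s : Set 𝕜} {n : WithTop ℕ∞} {m : ℕ}
    (hf : ContDiffOn 𝕜 n f s) (hs : IsOpen s) (hm : m < n) {y : 𝕜} (hy : y ∈ s) :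
    HasDerivAt (iteratedDeriv m f) (iteratedDeriv (m + 1) f y) y := by
  have hdiff : DifferentiableOn 𝕜 (iteratedDeriv m f) s :=
    (hf.differentiableOn_iteratedDerivWithin hm hs.uniqueDiffOn).congr
      (iteratedDerivWithin_of_isOpen hs).symm
  rw [iteratedDeriv_succ]
  exact (hdiff.differentiableAt (hs.mem_nhds hy)).hasDerivAt

section Composition

variable {u φ : ℝ → ℝ} {s : Set ℝ}

theorem deriv_comp_eqOn (hu : Differentiable ℝ u) (hφ : DifferentiableOn ℝ φ s) (hs : IsOpen s) :
    EqOn (deriv (u ∘ φ)) (fun y => deriv u (φ y) * deriv φ y) s := fun y hy =>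
  deriv_comp y (hu _) (hφ.differentiableAt (hs.mem_nhds hy))

theorem iteratedDeriv_two_comp_eqOn (hu : ContDiff ℝ 2 u) (hφ : ContDiffOn ℝ 2 φ s)
    (hs : IsOpen s) :
    EqOn (iteratedDeriv 2 (u ∘ φ))
      (fun y => iteratedDeriv 2 u (φ y) * deriv φ y ^ 2 + deriv u (φ y) * iteratedDeriv 2 φ y)
      s := by
  intro y hy
  have hu₁ z : HasDerivAt (deriv u) (iteratedDeriv 2 u z) z := by
    simpa using
      hu.contDiffOn.hasDerivAt_iteratedDeriv isOpen_univ (m := 1) (by norm_num) (mem_univ z)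
  have hφ₀ : HasDerivAt φ (deriv φ y) y := by
    simpa using hφ.hasDerivAt_iteratedDeriv hs (m := 0) (by norm_num) hy
  have hφ₁ : HasDerivAt (deriv φ) (iteratedDeriv 2 φ y) y := by
    simpa using hφ.hasDerivAt_iteratedDeriv hs (m := 1) (by norm_num) hy
  rw [iteratedDeriv_succ, iteratedDeriv_one, ((deriv_comp_eqOn (hu.differentiable (by norm_num))
    (hφ.differentiableOn (by norm_num)) hs).eventuallyEq_of_mem (hs.mem_nhds hy)).deriv_eq]
  refine (((hu₁ (φ y)).comp y hφ₀).mul hφ₁).deriv.trans ?_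
  rw [Function.comp_apply]
  ring

theorem iteratedDeriv_three_comp (hu : ContDiff ℝ 3 u) (hφ : ContDiffOn ℝ 3 φ s) (hs : IsOpen s)
    {y : ℝ} (hy : y ∈ s) :
    iteratedDeriv 3 (u ∘ φ) y = iteratedDeriv 3 u (φ y) * deriv φ y ^ 3
      + 3 * iteratedDeriv 2 u (φ y) * deriv φ y * iteratedDeriv 2 φ y
      + deriv u (φ y) * iteratedDeriv 3 φ y := by
  have hu₁ z : HasDerivAt (deriv u) (iteratedDeriv 2 u z) z := by
    simpa using
      hu.contDiffOn.hasDerivAt_iteratedDeriv isOpen_univ (m := 1) (by norm_num) (mem_univ z)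
  have hu₂ z : HasDerivAt (iteratedDeriv 2 u) (iteratedDeriv 3 u z) z :=
    hu.contDiffOn.hasDerivAt_iteratedDeriv isOpen_univ (m := 2) (by norm_num) (mem_univ z)
  have hφ₀ : HasDerivAt φ (deriv φ y) y := by
    simpa using hφ.hasDerivAt_iteratedDeriv hs (m := 0) (by norm_num) hy
  have hφ₁ : HasDerivAt (deriv φ) (iteratedDeriv 2 φ y) y := by
    simpa using hφ.hasDerivAt_iteratedDeriv hs (m := 1) (by norm_num) hy
  have hφ₂ : HasDerivAt (iteratedDeriv 2 φ) (iteratedDeriv 3 φ y) y :=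
    hφ.hasDerivAt_iteratedDeriv hs (m := 2) (by norm_num) hy
  rw [iteratedDeriv_succ, ((iteratedDeriv_two_comp_eqOn (hu.of_le (by norm_num))
    (hφ.of_le (by norm_num)) hs).eventuallyEq_of_mem (hs.mem_nhds hy)).deriv_eq]
  refine (((((hu₂ (φ y)).comp y hφ₀).mul (hφ₁.pow 2)).add
    (((hu₁ (φ y)).comp y hφ₀).mul hφ₂))).deriv.trans ?_
  simp only [Function.comp_apply, Pi.pow_apply]
  ring

end Composition

theorem invI_comp {u φ : ℝ → ℝ} {s : Set ℝ} {x : ℝ} (hu : ContDiff ℝ 3 u)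
    (hφ : ContDiffOn ℝ 3 φ s) (hs : IsOpen s) (hx : x ∈ s) (hu' : deriv u (φ x) ≠ 0)
    (hφ' : deriv φ x ≠ 0) :
    invI (u ∘ φ) x = invI u (φ x) + invI φ x / deriv u (φ x) ^ 2 := by
  rw [invI, invI, invI, deriv_comp_eqOn (hu.differentiable (by norm_num))
    (hφ.differentiableOn (by norm_num)) hs hx, iteratedDeriv_two_comp_eqOn (hu.of_le (by norm_num))
    (hφ.of_le (by norm_num)) hs hx, iteratedDeriv_three_comp hu hφ hs hx]
  field_simp
  ring

noncomputable def mobius (a b c d : ℝ) (y : ℝ) : ℝ := (a * y + b) / (c * y + d)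

section Mobius

variable {a b c d y : ℝ}

theorem isOpen_setOf_affine_ne_zero : IsOpen {y : ℝ | c * y + d ≠ 0} :=
  isOpen_ne_fun (by fun_prop) (by fun_prop)

theorem hasDerivAt_inv_affine_pow (n : ℕ) (hy : c * y + d ≠ 0) :
    HasDerivAt (fun y => (c * y + d)⁻¹ ^ n) (-(n * c) * (c * y + d)⁻¹ ^ (n + 1)) y := by
  have h : HasDerivAt (fun y => c * y + d) c y := by
    simpa using ((hasDerivAt_id y).const_mul c).add_const d
  refine ((h.inv hy).pow n).congr_deriv ?_
  rcases n with _ | n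
  · simp
  · simp only [Nat.add_sub_cancel, Pi.inv_apply, div_eq_mul_inv, ← inv_pow]
    push_cast
    ring

theorem hasDerivAt_mobius (hy : c * y + d ≠ 0) :
    HasDerivAt (mobius a b c d) ((a * d - b * c) * (c * y + d)⁻¹ ^ 2) y := by
  have hnum : HasDerivAt (fun y => a * y + b) a y := by
    simpa using ((hasDerivAt_id y).const_mul a).add_const b
  have hdenom : HasDerivAt (fun y => c * y + d) c y := by
    simpa using ((hasDerivAt_id y).const_mul c).add_const d
  refine (hnum.div hdenom hy).congr_deriv ?_
  field_simp
  ring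

theorem iteratedDeriv_succ_mobius_eqOn (n : ℕ) :
    EqOn (iteratedDeriv (n + 1) (mobius a b c d))
      (fun y => (-c) ^ n * (n + 1).factorial * (a * d - b * c) * (c * y + d)⁻¹ ^ (n + 2))
      {y | c * y + d ≠ 0} := by
  induction n with
  | zero =>
    intro y hy
    simpa using (hasDerivAt_mobius hy).deriv
  | succ n ih =>
    intro y hy
    rw [iteratedDeriv_succ,
      (ih.eventuallyEq_of_mem (isOpen_setOf_affine_ne_zero.mem_nhds hy)).deriv_eq]
    refine (((hasDerivAt_inv_affine_pow (n + 2) hy).const_mul _)).deriv.trans ?_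
    push_cast [Nat.factorial_succ]
    ring

theorem invI_mobius (hy : c * y + d ≠ 0) : invI (mobius a b c d) y = 0 := by
  have h1 := iteratedDeriv_succ_mobius_eqOn (a := a) (b := b) 0 hy
  have h2 := iteratedDeriv_succ_mobius_eqOn (a := a) (b := b) 1 hy
  have h3 := iteratedDeriv_succ_mobius_eqOn (a := a) (b := b) 2 hy
  rw [iteratedDeriv_one] at h1
  dsimp only at h1 h2 h3
  rw [invI, div_eq_zero_iff, h1, h2, h3]
  left
  generalize (c * y + d)⁻¹ = t
  norm_num [Nat.factorial]
  ring

theorem contDiffOn_mobius {n : WithTop ℕ∞} :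
    ContDiffOn ℝ n (mobius a b c d) {y | c * y + d ≠ 0} := by
  unfold mobius
  exact ContDiffOn.div (by fun_prop) (by fun_prop) fun y hy => hy

end Mobius

/-- `I` is a third-order differential invariant of the SL(2,ℝ)-action
`(x,u) ↦ ((ax+b)/(cx+d), u)` on `ℝ²`. -/
theorem stmt0 (u : ℝ → ℝ) (hu : ContDiff ℝ 3 u) (a b c d : ℝ)
    (hdet : a * d - b * c = 1) (x : ℝ) (hden : c * x + d ≠ 0)
    (φ : ℝ → ℝ) (hφ : ∀ y, φ y = (a * y + b) / (c * y + d))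
    (hu' : deriv u (φ x) ≠ 0) :
    invI (u ∘ φ) x = invI u (φ x) := by
  obtain rfl : φ = mobius a b c d := funext hφ
  have hφ' : deriv (mobius a b c d) x ≠ 0 := by
    rw [(hasDerivAt_mobius hden).deriv, hdet]
    simpa using hden
  rw [invI_comp hu contDiffOn_mobius isOpen_setOf_affine_ne_zero hden hu' hφ',
    invI_mobius hden, zero_div, add_zero]
end

section
/- Let u : ℝ → ℝ be of class C^∞ and let n ≥ 1, x ∈ ℝ. For t near 0 define w_t(y) = (1 + t y) · u(y/(1 + t y)). Then the derivative with respect to t at t = 0 of the n-th derivative w_t⁽ⁿ⁾(x) equals −n(n−2) u⁽ⁿ⁻¹⁾(x) − (2n−1) x u⁽ⁿ⁾(x) − x² u⁽ⁿ⁺¹⁾(x). -/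
open Finset

noncomputable def v7c : ℕ → ℕ → ℝ
  | 0, 0 => 1
  | 0, _ + 1 => 0
  | n + 1, 0 => (1 - (n : ℝ)) * v7c n 0
  | n + 1, k + 1 => v7c n k + (1 - (n : ℝ) - ((k : ℝ) + 1)) * v7c n (k + 1)

lemma v7c_zero : ∀ n k : ℕ, n < k → v7c n k = 0 := by
  intro n
  induction n with
  | zero => intro k hk; match k, hk with | k+1, _ => rfl
  | succ n IH =>
    intro k hk
    match k, hk with
    | k+1, hk =>
      have h1 : v7c n k = 0 := IH k (by omega)
      have h2 : v7c n (k+1) = 0 := IH (k+1) (by omega)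
      simp [v7c, h1, h2]

lemma v7c_diag : ∀ n : ℕ, v7c n n = 1 := by
  intro n
  induction n with
  | zero => rfl
  | succ n IH => simp [v7c, IH, v7c_zero n (n+1) (by omega)]

lemma v7c_subdiag : ∀ n : ℕ, v7c (n + 1) n = -(((n : ℝ) + 1) * ((n : ℝ) - 1)) := by
  intro n
  induction n with
  | zero => norm_num [v7c]
  | succ n IH =>
    rw [show n + 1 + 1 = (n+1) + 1 from rfl, v7c, IH, v7c_diag]
    push_cast
    ring

lemma v7sum_shift (A B T : ℕ → ℝ) (n : ℕ)
    (hT : ∀ k, T (k + 1) = B k + A (k + 1)) (hT0 : T 0 = A 0) (hA : A (n + 1) = 0) :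
    ∑ k ∈ range (n + 1), (A k + B k) = ∑ k ∈ range (n + 2), T k := by
  have h1 : ∑ k ∈ range (n + 2), A k = (∑ k ∈ range (n + 1), A k) + A (n + 1) :=
    Finset.sum_range_succ A (n + 1)
  have h2 : ∑ k ∈ range (n + 2), A k = (∑ k ∈ range (n + 1), A (k + 1)) + A 0 :=
    Finset.sum_range_succ' A (n + 1)
  have h3 : ∑ k ∈ range (n + 2), T k = (∑ k ∈ range (n + 1), T (k + 1)) + T 0 :=
    Finset.sum_range_succ' T (n + 1)
  rw [h3, hT0, Finset.sum_congr rfl (fun k _ => hT k), Finset.sum_add_distrib,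
    Finset.sum_add_distrib]
  linarith [h1, h2]

lemma v7key (u : ℝ → ℝ) (hu : ContDiff ℝ (⊤ : ℕ∞) u) (n : ℕ) :
    ∀ t y : ℝ, 1 + t * y ≠ 0 →
      iteratedDeriv n (fun z => (1 + t * z) * u (z / (1 + t * z))) y
        = ∑ k ∈ range (n + 1),
            v7c n k * t ^ (n - k) * (1 + t * y) ^ ((1 : ℤ) - n - k)
              * iteratedDeriv k u (y / (1 + t * y)) := by
  induction n with
  | zero =>
    intro t y h
    simp [iteratedDeriv_zero, v7c]
  | succ n IH =>
    intro t y h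
    rw [iteratedDeriv_succ]
    -- replace the n-th iterated derivative by the explicit sum, near y
    have hV : IsOpen {z : ℝ | 1 + t * z ≠ 0} := by
      have : Continuous fun z : ℝ => 1 + t * z := by continuity
      exact isOpen_compl_singleton.preimage this
    have hev : iteratedDeriv n (fun z => (1 + t * z) * u (z / (1 + t * z)))
        =ᶠ[nhds y] fun z => ∑ k ∈ range (n + 1),
            v7c n k * t ^ (n - k) * (1 + t * z) ^ ((1 : ℤ) - n - k)
              * iteratedDeriv k u (z / (1 + t * z)) :=
      Filter.eventually_of_mem (hV.mem_nhds h) (fun z hz => IH t z hz)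
    rw [hev.deriv_eq]
    -- derivative of each summand
    have hA : HasDerivAt (fun z : ℝ => 1 + t * z) t y := by
      simpa using ((hasDerivAt_id y).const_mul t).const_add 1
    have hterm : ∀ k, HasDerivAt
        (fun z => v7c n k * t ^ (n - k) * (1 + t * z) ^ ((1 : ℤ) - n - k)
          * iteratedDeriv k u (z / (1 + t * z)))
        (v7c n k * t ^ (n - k) * ((((1 : ℤ) - n - k : ℤ) : ℝ)
            * (1 + t * y) ^ ((1 : ℤ) - n - k - 1) * t)
            * iteratedDeriv k u (y / (1 + t * y))
          + v7c n k * t ^ (n - k) * (1 + t * y) ^ ((1 : ℤ) - n - k)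
            * (iteratedDeriv (k + 1) u (y / (1 + t * y))
                * ((1 * (1 + t * y) - y * t) / (1 + t * y) ^ 2))) y := by
      intro k
      have h2 : HasDerivAt (fun z : ℝ => (1 + t * z) ^ ((1 : ℤ) - n - k))
          ((((1 : ℤ) - n - k : ℤ) : ℝ) * (1 + t * y) ^ ((1 : ℤ) - n - k - 1) * t) y := by
        have := (hasDerivAt_zpow ((1 : ℤ) - n - k) (1 + t * y) (Or.inl h)).comp y hA
        simpa [Function.comp_def, mul_assoc] using this
      have h3 : HasDerivAt (fun z : ℝ => z / (1 + t * z))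
          ((1 * (1 + t * y) - y * t) / (1 + t * y) ^ 2) y :=
        (hasDerivAt_id y).div hA h
      have h4 : HasDerivAt (fun z : ℝ => iteratedDeriv k u (z / (1 + t * z)))
          (iteratedDeriv (k + 1) u (y / (1 + t * y))
            * ((1 * (1 + t * y) - y * t) / (1 + t * y) ^ 2)) y := by
        have hd : HasDerivAt (iteratedDeriv k u)
            (iteratedDeriv (k + 1) u (y / (1 + t * y))) (y / (1 + t * y)) := by
          rw [iteratedDeriv_succ]
          exact ((hu.differentiable_iteratedDeriv k (by exact_mod_cast ENat.coe_lt_top k)) _).hasDerivAt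
        exact hd.comp y h3
      exact ((h2.const_mul (v7c n k * t ^ (n - k))).mul h4)
    have hsum := HasDerivAt.fun_sum (u := range (n + 1)) (fun k _ => hterm k)
    rw [hsum.deriv]
    refine Eq.trans (Finset.sum_congr rfl ?_) (v7sum_shift
      (fun k => (1 - (n : ℝ) - (k : ℝ)) * v7c n k * t ^ (n + 1 - k)
        * (1 + t * y) ^ ((1 : ℤ) - (n + 1 : ℕ) - k) * iteratedDeriv k u (y / (1 + t * y)))
      (fun k => v7c n k * t ^ (n - k)
        * (1 + t * y) ^ ((1 : ℤ) - (n + 1 : ℕ) - (k + 1 : ℕ))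
        * iteratedDeriv (k + 1) u (y / (1 + t * y)))
      (fun k => v7c (n + 1) k * t ^ (n + 1 - k)
        * (1 + t * y) ^ ((1 : ℤ) - (n + 1 : ℕ) - k) * iteratedDeriv k u (y / (1 + t * y)))
      n ?_ ?_ ?_)
    · -- each summand's derivative equals A k + B k
      intro k hk
      have hk' : k ≤ n := by have := Finset.mem_range.mp hk; omega
      have hp : n + 1 - k = (n - k) + 1 := by omega
      have e1 : (1 : ℤ) - (n : ℕ) - (k : ℕ) - 1 = 1 - ((n + 1 : ℕ) : ℤ) - (k : ℕ) := by
        push_cast; ring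
      have e3 : 1 * (1 + t * y) - y * t = 1 := by ring
      have e2 : ((1 + t * y) : ℝ) ^ ((1 : ℤ) - ((n + 1 : ℕ) : ℤ) - ((k + 1 : ℕ) : ℤ))
          = (1 + t * y) ^ ((1 : ℤ) - (n : ℕ) - (k : ℕ)) / (1 + t * y) ^ (2 : ℕ) := by
        rw [show (1 : ℤ) - ((n + 1 : ℕ) : ℤ) - ((k + 1 : ℕ) : ℤ)
            = ((1 : ℤ) - (n : ℕ) - (k : ℕ)) - 2 by push_cast; ring, zpow_sub₀ h,
          show ((2 : ℤ)) = ((2 : ℕ) : ℤ) from rfl, zpow_natCast]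
      rw [e1, e3, e2, hp, pow_succ]
      push_cast
      ring
    · -- T (k+1) = B k + A (k+1)
      intro k
      show v7c (n + 1) (k + 1) * _ * _ * _ = _
      rw [show v7c (n + 1) (k + 1)
          = v7c n k + (1 - (n : ℝ) - ((k : ℝ) + 1)) * v7c n (k + 1) from rfl]
      simp only [Nat.succ_sub_succ]
      push_cast
      ring
    · -- T 0 = A 0
      show v7c (n + 1) 0 * _ * _ * _ = _
      rw [show v7c (n + 1) 0 = (1 - (n : ℝ)) * v7c n 0 from rfl]
      push_cast
      ring
    · -- A (n+1) = 0
      simp [v7c_zero n (n + 1) (by omega)]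

/-- For smooth `u`, with `w_t(y) = (1 + t y)·u(y/(1 + t y))` (the transform of `u`
under the flow of `v₇ = x² ∂/∂x + xu ∂/∂u`), the `t`-derivative at `t = 0` of
`w_t⁽ⁿ⁾(x)` equals `−n(n−2) u⁽ⁿ⁻¹⁾(x) − (2n−1) x u⁽ⁿ⁾(x) − x² u⁽ⁿ⁺¹⁾(x)`. -/
theorem stmt4 (u : ℝ → ℝ) (hu : ContDiff ℝ (⊤ : ℕ∞) u) (n : ℕ) (hn : 1 ≤ n) (x : ℝ) :
    deriv (fun t : ℝ => iteratedDeriv n (fun y => (1 + t * y) * u (y / (1 + t * y))) x) 0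
      = -((n : ℝ) * ((n : ℝ) - 2)) * iteratedDeriv (n - 1) u x
        - (2 * (n : ℝ) - 1) * x * iteratedDeriv n u x
        - x ^ 2 * iteratedDeriv (n + 1) u x := by
  obtain ⟨j, rfl⟩ : ∃ j, n = j + 1 := ⟨n - 1, by omega⟩
  have hne : (1 : ℝ) + 0 * x ≠ 0 := by norm_num
  have hev : (fun t : ℝ => iteratedDeriv (j + 1) (fun y => (1 + t * y) * u (y / (1 + t * y))) x)
      =ᶠ[nhds (0 : ℝ)] (fun t : ℝ => ∑ k ∈ Finset.range (j + 1 + 1),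
        v7c (j + 1) k * t ^ (j + 1 - k) * (1 + t * x) ^ ((1 : ℤ) - (j + 1 : ℕ) - k)
          * iteratedDeriv k u (x / (1 + t * x))) := by
    have hc : ContinuousAt (fun t : ℝ => 1 + t * x) 0 := by fun_prop
    have h0 : ∀ᶠ t : ℝ in nhds 0, 1 + t * x ≠ 0 := hc.eventually_ne (by norm_num)
    exact h0.mono (fun t ht => v7key u hu (j + 1) t x ht)
  rw [hev.deriv_eq]
  have hA : HasDerivAt (fun t : ℝ => 1 + t * x) x 0 := by
    simpa using ((hasDerivAt_id (0 : ℝ)).mul_const x).const_add 1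
  have hterm : ∀ k, HasDerivAt
      (fun t : ℝ => v7c (j + 1) k * t ^ (j + 1 - k)
        * (1 + t * x) ^ ((1 : ℤ) - (j + 1 : ℕ) - k) * iteratedDeriv k u (x / (1 + t * x)))
      ((v7c (j + 1) k * ((j + 1 - k : ℕ) * (0 : ℝ) ^ (j + 1 - k - 1))
            * (1 + 0 * x) ^ ((1 : ℤ) - (j + 1 : ℕ) - k)
          + v7c (j + 1) k * (0 : ℝ) ^ (j + 1 - k)
            * ((((1 : ℤ) - (j + 1 : ℕ) - k : ℤ) : ℝ)
                * (1 + 0 * x) ^ ((1 : ℤ) - (j + 1 : ℕ) - k - 1) * x))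
          * iteratedDeriv k u (x / (1 + 0 * x))
        + v7c (j + 1) k * (0 : ℝ) ^ (j + 1 - k) * (1 + 0 * x) ^ ((1 : ℤ) - (j + 1 : ℕ) - k)
          * (iteratedDeriv (k + 1) u (x / (1 + 0 * x))
              * ((0 * (1 + 0 * x) - x * x) / (1 + 0 * x) ^ 2))) 0 := by
    intro k
    have hpow : HasDerivAt (fun t : ℝ => v7c (j + 1) k * t ^ (j + 1 - k))
        (v7c (j + 1) k * ((j + 1 - k : ℕ) * (0 : ℝ) ^ (j + 1 - k - 1))) 0 := by
      simpa using (hasDerivAt_pow (j + 1 - k) (0 : ℝ)).const_mul (v7c (j + 1) k)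
    have h2 : HasDerivAt (fun t : ℝ => (1 + t * x) ^ ((1 : ℤ) - (j + 1 : ℕ) - k))
        ((((1 : ℤ) - (j + 1 : ℕ) - k : ℤ) : ℝ)
          * (1 + 0 * x) ^ ((1 : ℤ) - (j + 1 : ℕ) - k - 1) * x) 0 := by
      have := (hasDerivAt_zpow ((1 : ℤ) - (j + 1 : ℕ) - k) (1 + 0 * x) (Or.inl hne)).comp 0 hA
      simpa [Function.comp_def, mul_assoc] using this
    have h3 : HasDerivAt (fun t : ℝ => x / (1 + t * x))
        ((0 * (1 + 0 * x) - x * x) / (1 + 0 * x) ^ 2) 0 :=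
      (hasDerivAt_const (0 : ℝ) x).div hA hne
    have h4 : HasDerivAt (fun t : ℝ => iteratedDeriv k u (x / (1 + t * x)))
        (iteratedDeriv (k + 1) u (x / (1 + 0 * x))
          * ((0 * (1 + 0 * x) - x * x) / (1 + 0 * x) ^ 2)) 0 := by
      have hd : HasDerivAt (iteratedDeriv k u)
          (iteratedDeriv (k + 1) u (x / (1 + 0 * x))) (x / (1 + 0 * x)) := by
        rw [iteratedDeriv_succ]
        exact ((hu.differentiable_iteratedDeriv k (by exact_mod_cast ENat.coe_lt_top k)) _).hasDerivAt
      exact hd.comp 0 h3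
    exact (hpow.mul h2).mul h4
  have hsum := HasDerivAt.fun_sum (u := Finset.range (j + 1 + 1)) (fun k _ => hterm k)
  rw [hsum.deriv, Finset.sum_range_succ, Finset.sum_range_succ,
    Finset.sum_eq_zero (fun k hk => by
      have hk' : k < j := Finset.mem_range.mp hk
      have hz1 : (0 : ℝ) ^ (j + 1 - k) = 0 := zero_pow (by omega)
      have hz2 : (0 : ℝ) ^ (j + 1 - k - 1) = 0 := zero_pow (by omega)
      simp [hz1, hz2])]
  have e1 : j + 1 - j = 1 := by omega
  have e3 : j + 1 - (j + 1) = 0 := by omega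
  have hx : x / (1 + 0 * x) = x := by norm_num
  rw [e1, e3, hx, v7c_diag (j + 1), v7c_subdiag j]
  norm_num
  ring
end

section
/- Let u : ℝ → ℝ be of class C^∞ and let W : ℝ × ℝ → ℝ be of class C^∞ on an open set containing {0} × ℝ, satisfying W(t, x + t·u(x)) = u(x) for all (t,x) in that open set. Then for every n ≥ 1 and every x ∈ ℝ, the derivative with respect to t at t = 0 of ∂ₓⁿ W(t, x) equals −(1/2)·Σ_{k=1}^{n} C(n+1, k) u⁽ᵏ⁾(x) u⁽ⁿ⁺¹⁻ᵏ⁾(x) − u(x) u⁽ⁿ⁺¹⁾(x), where C(n+1,k) denotes the binomial coefficient. -/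
open Finset
open scoped ContDiff

/-- partial derivative in direction `v` -/
private noncomputable def pd (v : ℝ × ℝ) (h : ℝ × ℝ → ℝ) : ℝ × ℝ → ℝ :=
  fun p => fderiv ℝ h p v

private lemma pd_contDiffOn {S : Set (ℝ × ℝ)} (hS : IsOpen S) {h : ℝ × ℝ → ℝ}
    (hh : ContDiffOn ℝ ∞ h S) (v : ℝ × ℝ) :
    ContDiffOn ℝ ∞ (pd v h) S := by
  have h1 : ContDiffOn ℝ ∞ (fderiv ℝ h) S :=
    ((contDiffOn_infty_iff_fderiv_of_isOpen hS).1 hh).2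
  exact (ContinuousLinearMap.apply ℝ ℝ v).contDiff.comp_contDiffOn h1

private lemma diffAt_of_cd {S : Set (ℝ × ℝ)} (hS : IsOpen S) {h : ℝ × ℝ → ℝ}
    (hh : ContDiffOn ℝ ∞ h S) {p : ℝ × ℝ} (hp : p ∈ S) :
    DifferentiableAt ℝ h p :=
  (hh.contDiffAt (hS.mem_nhds hp)).differentiableAt (by norm_num)

private lemma pd_eval {S : Set (ℝ × ℝ)} (hS : IsOpen S) {h : ℝ × ℝ → ℝ}
    (hh : ContDiffOn ℝ ∞ h S) (v : ℝ × ℝ) {p : ℝ × ℝ} (hp : p ∈ S) (w : ℝ × ℝ) :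
    pd w (pd v h) p = fderiv ℝ (fderiv ℝ h) p w v := by
  have h1 : ContDiffOn ℝ ∞ (fderiv ℝ h) S :=
    ((contDiffOn_infty_iff_fderiv_of_isOpen hS).1 hh).2
  have hdfa : DifferentiableAt ℝ (fderiv ℝ h) p :=
    (h1.contDiffAt (hS.mem_nhds hp)).differentiableAt (by norm_num)
  have hcomp : HasFDerivAt (pd v h)
      ((ContinuousLinearMap.apply ℝ ℝ v).comp (fderiv ℝ (fderiv ℝ h) p)) p :=
    (ContinuousLinearMap.apply ℝ ℝ v).hasFDerivAt.comp p hdfa.hasFDerivAt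
  have := hcomp.fderiv
  simp only [pd, this]
  rfl

private lemma pd_swap {S : Set (ℝ × ℝ)} (hS : IsOpen S) {h : ℝ × ℝ → ℝ}
    (hh : ContDiffOn ℝ ∞ h S) (v w : ℝ × ℝ) {p : ℝ × ℝ} (hp : p ∈ S) :
    pd w (pd v h) p = pd v (pd w h) p := by
  rw [pd_eval hS hh v hp w, pd_eval hS hh w hp v]
  exact ((hh.contDiffAt (hS.mem_nhds hp)).isSymmSndFDerivAt (by rw [minSmoothness_of_isRCLikeNormedField]; exact WithTop.coe_le_coe.2 le_top)) w v

private lemma deriv_slice_x {S : Set (ℝ × ℝ)} (hS : IsOpen S) {h : ℝ × ℝ → ℝ}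
    (hh : ContDiffOn ℝ ∞ h S) {t x : ℝ} (hp : (t, x) ∈ S) :
    deriv (fun y => h (t, y)) x = pd (0, 1) h (t, x) := by
  have hd := diffAt_of_cd hS hh hp
  have hc : HasDerivAt (fun y : ℝ => ((t, y) : ℝ × ℝ)) (0, 1) x :=
    (hasDerivAt_const x t).prodMk (hasDerivAt_id x)
  exact (hd.hasFDerivAt.comp_hasDerivAt x hc).deriv

private lemma deriv_slice_t {S : Set (ℝ × ℝ)} (hS : IsOpen S) {h : ℝ × ℝ → ℝ}
    (hh : ContDiffOn ℝ ∞ h S) {t x : ℝ} (hp : (t, x) ∈ S) :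
    deriv (fun s => h (s, x)) t = pd (1, 0) h (t, x) := by
  have hd := diffAt_of_cd hS hh hp
  have hc : HasDerivAt (fun s : ℝ => ((s, x) : ℝ × ℝ)) (1, 0) t :=
    (hasDerivAt_id t).prodMk (hasDerivAt_const t x)
  exact (hd.hasFDerivAt.comp_hasDerivAt t hc).deriv

private lemma pdxn_contDiffOn {S : Set (ℝ × ℝ)} (hS : IsOpen S) {h : ℝ × ℝ → ℝ}
    (hh : ContDiffOn ℝ ∞ h S) (n : ℕ) :
    ContDiffOn ℝ ∞ ((pd (0, 1))^[n] h) S := by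
  induction n with
  | zero => exact hh
  | succ n ih => rw [Function.iterate_succ_apply']; exact pd_contDiffOn hS ih _

private lemma iter_slice {S : Set (ℝ × ℝ)} (hS : IsOpen S) {h : ℝ × ℝ → ℝ}
    (hh : ContDiffOn ℝ ∞ h S) :
    ∀ (n : ℕ) (t x : ℝ), (t, x) ∈ S →
      iteratedDeriv n (fun y => h (t, y)) x = (pd (0, 1))^[n] h (t, x) := by
  intro n
  induction n with
  | zero => intro t x _; simp
  | succ n ih =>
    intro t x hp
    rw [iteratedDeriv_succ]
    have hmem : ∀ᶠ y in nhds x, (t, y) ∈ S :=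
      ((continuous_const.prodMk continuous_id).continuousAt (x := x)).preimage_mem_nhds
        (hS.mem_nhds hp)
    have hev : iteratedDeriv n (fun y => h (t, y)) =ᶠ[nhds x]
        fun y => (pd (0, 1))^[n] h (t, y) :=
      hmem.mono fun y hy => ih t y hy
    rw [hev.deriv_eq, deriv_slice_x hS (pdxn_contDiffOn hS hh n) hp]
    exact (congrFun (Function.iterate_succ_apply' (pd (0, 1)) n h) (t, x)).symm

private lemma swap_iter {S : Set (ℝ × ℝ)} (hS : IsOpen S) {h : ℝ × ℝ → ℝ}
    (hh : ContDiffOn ℝ ∞ h S) :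
    ∀ (n : ℕ) (p : ℝ × ℝ), p ∈ S →
      pd (1, 0) ((pd (0, 1))^[n] h) p = (pd (0, 1))^[n] (pd (1, 0) h) p := by
  intro n
  induction n with
  | zero => intro p _; rfl
  | succ n ih =>
    intro p hp
    rw [Function.iterate_succ_apply',
      pd_swap hS (pdxn_contDiffOn hS hh n) (0, 1) (1, 0) hp]
    have hev : pd (1, 0) ((pd (0, 1))^[n] h) =ᶠ[nhds p]
        (pd (0, 1))^[n] (pd (1, 0) h) :=
      Filter.eventuallyEq_of_mem (hS.mem_nhds hp) fun q hq => ih q hq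
    rw [show pd (0, 1) (pd (1, 0) ((pd (0, 1))^[n] h)) p
          = fderiv ℝ (pd (1, 0) ((pd (0, 1))^[n] h)) p (0, 1) from rfl,
      hev.fderiv_eq]
    exact (congrFun (Function.iterate_succ_apply' (pd (0, 1)) n (pd (1, 0) h)) p).symm

private lemma pdt_val {u : ℝ → ℝ} (hu : ContDiff ℝ ∞ u) {W : ℝ → ℝ → ℝ}
    {S : Set (ℝ × ℝ)} (hS : IsOpen S) (hS0 : ∀ x : ℝ, ((0 : ℝ), x) ∈ S)
    (hW : ContDiffOn ℝ ∞ (fun p : ℝ × ℝ => W p.1 p.2) S)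
    (hWu : ∀ t x : ℝ, (t, x) ∈ S → W t (x + t * u x) = u x) (y : ℝ) :
    pd (1, 0) (fun p : ℝ × ℝ => W p.1 p.2) (0, y) = -(u y * deriv u y) := by
  set g : ℝ × ℝ → ℝ := fun p => W p.1 p.2 with hg
  have hd : DifferentiableAt ℝ g (0, y) := diffAt_of_cd hS hW (hS0 y)
  -- the curve t ↦ (t, y + t * u y)
  have hc : HasDerivAt (fun t : ℝ => ((t, y + t * u y) : ℝ × ℝ)) (1, u y) 0 := by
    refine (hasDerivAt_id 0).prodMk ?_
    simpa using ((hasDerivAt_id (0 : ℝ)).mul_const (u y)).const_add y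
  have h00 : (fun t : ℝ => ((t, y + t * u y) : ℝ × ℝ)) 0 = (0, y) := by simp
  have hd' : HasFDerivAt g (fderiv ℝ g (0, y))
      ((fun t : ℝ => ((t, y + t * u y) : ℝ × ℝ)) 0) := by
    rw [h00]; exact hd.hasFDerivAt
  have hcomp : HasDerivAt (fun t : ℝ => g (t, y + t * u y)) (fderiv ℝ g (0, y) (1, u y)) 0 :=
    hd'.comp_hasDerivAt (f := fun t : ℝ => ((t, y + t * u y) : ℝ × ℝ)) 0 hc
  -- the composition is eventually constant
  have hev : (fun t : ℝ => g (t, y + t * u y)) =ᶠ[nhds (0 : ℝ)] fun _ => u y := by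
    have hmem : ∀ᶠ t in nhds (0 : ℝ), (t, y) ∈ S :=
      ((continuous_id.prodMk continuous_const).continuousAt (x := (0 : ℝ))).preimage_mem_nhds
        (hS.mem_nhds (hS0 y))
    exact hmem.mono fun t ht => hWu t y ht
  have hzero : fderiv ℝ g (0, y) (1, u y) = 0 := by
    have h1 := hcomp.deriv
    rw [hev.deriv_eq, deriv_const] at h1
    exact h1.symm
  -- W 0 = u
  have hW0 : (fun z => g (0, z)) = u := by
    funext z; simpa using hWu 0 z (hS0 z)
  have hx1 : fderiv ℝ g (0, y) (0, 1) = deriv u y := by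
    rw [← hW0]
    exact (deriv_slice_x hS hW (hS0 y)).symm
  have hsplit : ((1 : ℝ), u y) = (1, 0) + u y • ((0 : ℝ), (1 : ℝ)) := by
    simp [Prod.ext_iff]
  have := hzero
  rw [hsplit, map_add, (fderiv ℝ g (0, y)).map_smul, hx1] at this
  have : fderiv ℝ g (0, y) (1, 0) + u y * deriv u y = 0 := by simpa [smul_eq_mul] using this
  show fderiv ℝ g (0, y) (1, 0) = -(u y * deriv u y)
  linarith

private lemma cd_iter {f : ℝ → ℝ} (hf : ContDiff ℝ ∞ f) (k : ℕ) :
    ContDiff ℝ ∞ (iteratedDeriv k f) := by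
  rw [iteratedDeriv_eq_iterate]; exact hf.iterate_deriv k

private lemma leibniz {f g : ℝ → ℝ} (hf : ContDiff ℝ ∞ f) (hg : ContDiff ℝ ∞ g) :
    ∀ (n : ℕ) (x : ℝ), iteratedDeriv n (fun y => f y * g y) x
      = ∑ k ∈ range (n + 1),
          (n.choose k : ℝ) * (iteratedDeriv k f x * iteratedDeriv (n - k) g x) := by
  intro n
  induction n with
  | zero => intro x; simp
  | succ n ih =>
    intro x
    rw [iteratedDeriv_succ, funext ih]
    have hdf : ∀ k x₀, DifferentiableAt ℝ (iteratedDeriv k f) x₀ := fun k x₀ =>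
      (cd_iter hf k).differentiable (by norm_num) x₀
    have hdg : ∀ k x₀, DifferentiableAt ℝ (iteratedDeriv k g) x₀ := fun k x₀ =>
      (cd_iter hg k).differentiable (by norm_num) x₀
    rw [deriv_fun_sum fun k _ => by
      exact (((hdf k x).mul (hdg (n - k) x)).const_mul _)]
    have hterm : ∀ k ∈ range (n + 1),
        deriv (fun y => (n.choose k : ℝ) *
            (iteratedDeriv k f y * iteratedDeriv (n - k) g y)) x
          = (n.choose k : ℝ) * (iteratedDeriv (k + 1) f x * iteratedDeriv (n - k) g x
              + iteratedDeriv k f x * iteratedDeriv (n - k + 1) g x) := by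
      intro k _
      rw [deriv_const_mul _ (d := fun y => iteratedDeriv k f y * iteratedDeriv (n - k) g y) ((hdf k x).mul (hdg (n - k) x)),
        deriv_fun_mul (hdf k x) (hdg (n - k) x), ← iteratedDeriv_succ, ← iteratedDeriv_succ]
    rw [Finset.sum_congr rfl hterm]
    -- Pascal step
    have key : ∑ k ∈ range (n + 2),
          ((n + 1).choose k : ℝ) * (iteratedDeriv k f x * iteratedDeriv (n + 1 - k) g x)
        = ∑ k ∈ range (n + 1), (n.choose k : ℝ) *
            (iteratedDeriv (k + 1) f x * iteratedDeriv (n - k) g x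
              + iteratedDeriv k f x * iteratedDeriv (n - k + 1) g x) := by
      set a : ℕ → ℝ := fun k => iteratedDeriv k f x
      set b : ℕ → ℝ := fun k => iteratedDeriv k g x
      have hs : ∀ k ∈ range (n + 1), (n.choose k : ℝ) *
            (a (k + 1) * b (n - k) + a k * b (n - k + 1))
          = (n.choose k : ℝ) * (a (k + 1) * b (n - k))
            + (n.choose k : ℝ) * (a k * b (n + 1 - k)) := by
        intro k hk
        have : n - k + 1 = n + 1 - k := by
          have := Finset.mem_range.1 hk; omega
        rw [this]; ring
      rw [Finset.sum_congr rfl hs, Finset.sum_add_distrib]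
      rw [Finset.sum_range_succ' (fun k => ((n + 1).choose k : ℝ) * (a k * b (n + 1 - k))) (n + 1)]
      rw [Finset.sum_range_succ' (fun k => ((n).choose k : ℝ) * (a k * b (n + 1 - k))) n]
      have h1 : ∀ i ∈ range (n + 1),
          (((n + 1).choose (i + 1) : ℕ) : ℝ) * (a (i + 1) * b (n + 1 - (i + 1)))
            = (n.choose i : ℝ) * (a (i + 1) * b (n - i))
              + (n.choose (i + 1) : ℝ) * (a (i + 1) * b (n - i)) := by
        intro i _
        have h2 : n + 1 - (i + 1) = n - i := by omega
        rw [h2, Nat.choose_succ_succ, Nat.cast_add]; ring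
      rw [Finset.sum_congr rfl h1, Finset.sum_add_distrib]
      rw [Finset.sum_range_succ
        (fun i => ((n.choose (i + 1) : ℕ) : ℝ) * (a (i + 1) * b (n - i))) n]
      have h3 : ∀ i ∈ range n, n + 1 - (i + 1) = n - i := fun i _ => by omega
      have h4 : ∑ i ∈ range n, ((n.choose (i + 1) : ℕ) : ℝ) * (a (i + 1) * b (n + 1 - (i + 1)))
          = ∑ i ∈ range n, ((n.choose (i + 1) : ℕ) : ℝ) * (a (i + 1) * b (n - i)) :=
        Finset.sum_congr rfl fun i hi => by rw [h3 i hi]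
      rw [h4]
      simp [Nat.choose_succ_self]
      ring
    rw [← key]

private lemma pascal (a b : ℕ → ℝ) (n : ℕ) :
    ∑ k ∈ range (n + 2), ((n + 1).choose k : ℝ) * (a k * b (n + 1 - k))
      = ∑ k ∈ range (n + 1), (n.choose k : ℝ) * (a (k + 1) * b (n - k))
        + ∑ k ∈ range (n + 1), (n.choose k : ℝ) * (a k * b (n + 1 - k)) := by
  rw [Finset.sum_range_succ' (fun k => ((n + 1).choose k : ℝ) * (a k * b (n + 1 - k))) (n + 1)]
  rw [Finset.sum_range_succ' (fun k => ((n).choose k : ℝ) * (a k * b (n + 1 - k))) n]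
  have h1 : ∀ i ∈ range (n + 1),
      (((n + 1).choose (i + 1) : ℕ) : ℝ) * (a (i + 1) * b (n + 1 - (i + 1)))
        = (n.choose i : ℝ) * (a (i + 1) * b (n - i))
          + (n.choose (i + 1) : ℝ) * (a (i + 1) * b (n - i)) := by
    intro i _
    have h2 : n + 1 - (i + 1) = n - i := by omega
    rw [h2, Nat.choose_succ_succ, Nat.cast_add]; ring
  rw [Finset.sum_congr rfl h1, Finset.sum_add_distrib]
  rw [Finset.sum_range_succ (fun i => ((n.choose (i + 1) : ℕ) : ℝ) * (a (i + 1) * b (n - i))) n]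
  have h4 : ∑ i ∈ range n, ((n.choose (i + 1) : ℕ) : ℝ) * (a (i + 1) * b (n + 1 - (i + 1)))
      = ∑ i ∈ range n, ((n.choose (i + 1) : ℕ) : ℝ) * (a (i + 1) * b (n - i)) :=
    Finset.sum_congr rfl fun i hi => by
      have : n + 1 - (i + 1) = n - i := by omega
      rw [this]
  rw [h4]
  simp [Nat.choose_succ_self]
  ring

private lemma final_sum (a : ℕ → ℝ) (n : ℕ) :
    -(∑ k ∈ range (n + 1), (n.choose k : ℝ) * (a k * a (n - k + 1)))
      = -(1 / 2) * ∑ k ∈ Icc 1 n, ((n + 1).choose k : ℝ) * a k * a (n + 1 - k)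
        - a 0 * a (n + 1) := by
  set L : ℝ := ∑ k ∈ range (n + 1), (n.choose k : ℝ) * (a k * a (n + 1 - k)) with hL
  have hL0 : ∑ k ∈ range (n + 1), (n.choose k : ℝ) * (a k * a (n - k + 1)) = L :=
    Finset.sum_congr rfl fun k hk => by
      have : n - k + 1 = n + 1 - k := by
        have := Finset.mem_range.1 hk; omega
      rw [this]
  have hrefl : ∑ k ∈ range (n + 1), (n.choose k : ℝ) * (a (k + 1) * a (n - k)) = L := by
    rw [hL]
    rw [← Finset.sum_range_reflect (fun k => (n.choose k : ℝ) * (a k * a (n + 1 - k))) (n + 1)]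
    refine Finset.sum_congr rfl fun j hj => ?_
    have hj' : j ≤ n := by
      have := Finset.mem_range.1 hj; omega
    have e1 : n + 1 - 1 - j = n - j := by omega
    have e2 : n + 1 - (n - j) = j + 1 := by omega
    rw [e1, e2, Nat.choose_symm hj']
    ring
  have hS : ∑ k ∈ range (n + 2), ((n + 1).choose k : ℝ) * (a k * a (n + 1 - k))
      = 2 * L := by
    rw [pascal a a n, hrefl]; ring
  have hIcc : ∑ k ∈ Icc 1 n, ((n + 1).choose k : ℝ) * a k * a (n + 1 - k)
      = 2 * L - 2 * (a 0 * a (n + 1)) := by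
    have e : Finset.Icc 1 n = Finset.Ico 1 (n + 1) := (Finset.Ico_add_one_right_eq_Icc 1 n).symm
    rw [e, Finset.sum_Ico_eq_sum_range]
    have hsplit := hS
    rw [Finset.sum_range_succ (fun k => ((n + 1).choose k : ℝ) * (a k * a (n + 1 - k))) (n + 1),
      Finset.sum_range_succ' (fun k => ((n + 1).choose k : ℝ) * (a k * a (n + 1 - k))) n]
      at hsplit
    simp only [Nat.choose_self, Nat.choose_zero_right, Nat.cast_one, one_mul,
      Nat.sub_self, Nat.sub_zero, Nat.add_sub_cancel] at hsplit
    have : ∑ i ∈ range (n + 1 - 1), ((n + 1).choose (1 + i) : ℝ) * a (1 + i) * a (n + 1 - (1 + i))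
        = ∑ i ∈ range n, ((n + 1).choose (i + 1) : ℝ) * (a (i + 1) * a (n + 1 - (i + 1))) := by
      have : n + 1 - 1 = n := by omega
      rw [this]
      exact Finset.sum_congr rfl fun i _ => by rw [add_comm 1 i]; ring
    rw [this]
    linarith [hsplit, mul_comm (a (n + 1)) (a 0)]
  rw [hL0, hIcc]
  ring

private lemma iterated_neg (f : ℝ → ℝ) (n : ℕ) (x : ℝ) :
    iteratedDeriv n (fun y => -(f y)) x = -(iteratedDeriv n f x) := by
  rw [iteratedDeriv_eq_iteratedFDeriv, iteratedDeriv_eq_iteratedFDeriv]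
  have : iteratedFDeriv ℝ n (fun y => -(f y)) x = -(iteratedFDeriv ℝ n f x) := by
    exact iteratedFDeriv_neg_apply
  simp [this]

open Finset in
/-- For smooth `u` and smooth `W` (defined on an open set containing `{0} × ℝ`)
satisfying the implicit relation `W(t, x + t·u(x)) = u(x)` (the transform of the
graph of `u` under the flow of `v₆ = u ∂/∂x`), the `t`-derivative at `t = 0` of
`∂ₓⁿ W(t,x)` equals
`−(1/2)·Σ_{k=1}^{n} C(n+1,k) u⁽ᵏ⁾(x) u⁽ⁿ⁺¹⁻ᵏ⁾(x) − u(x) u⁽ⁿ⁺¹⁾(x)`. -/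
theorem stmt5 (u : ℝ → ℝ) (hu : ContDiff ℝ (⊤ : ℕ∞) u)
    (W : ℝ → ℝ → ℝ) (S : Set (ℝ × ℝ)) (hS : IsOpen S) (hS0 : ∀ x : ℝ, ((0 : ℝ), x) ∈ S)
    (hW : ContDiffOn ℝ (⊤ : ℕ∞) (fun p : ℝ × ℝ => W p.1 p.2) S)
    (hWu : ∀ t x : ℝ, (t, x) ∈ S → W t (x + t * u x) = u x)
    (n : ℕ) (hn : 1 ≤ n) (x : ℝ) :
    deriv (fun t : ℝ => iteratedDeriv n (W t) x) 0
      = -(1 / 2) * ∑ k ∈ Icc 1 n,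
            ((n + 1).choose k : ℝ) * iteratedDeriv k u x * iteratedDeriv (n + 1 - k) u x
        - u x * iteratedDeriv (n + 1) u x := by
  have hu' : ContDiff ℝ ∞ u := hu.of_le (by simp)
  have hW' : ContDiffOn ℝ ∞ (fun p : ℝ × ℝ => W p.1 p.2) S := hW.of_le (by simp)
  set g : ℝ × ℝ → ℝ := fun p => W p.1 p.2 with hgdef
  have key : deriv (fun t : ℝ => iteratedDeriv n (W t) x) 0
      = iteratedDeriv n (fun y => -(u y * deriv u y)) x := by
    have hmem : ∀ᶠ t in nhds (0 : ℝ), (t, x) ∈ S :=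
      ((continuous_id.prodMk continuous_const).continuousAt (x := (0 : ℝ))).preimage_mem_nhds
        (hS.mem_nhds (hS0 x))
    have hev : (fun t : ℝ => iteratedDeriv n (W t) x) =ᶠ[nhds (0 : ℝ)]
        fun t => (pd (0, 1))^[n] g (t, x) :=
      hmem.mono fun t ht => iter_slice hS hW' n t x ht
    rw [hev.deriv_eq, deriv_slice_t hS (pdxn_contDiffOn hS hW' n) (hS0 x),
      swap_iter hS hW' n (0, x) (hS0 x),
      ← iter_slice hS (pd_contDiffOn hS hW' (1, 0)) n 0 x (hS0 x)]
    congr 1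
    funext y
    exact pdt_val hu' hS hS0 hW' hWu y
  rw [key]
  have hdu : ContDiff ℝ ∞ (deriv u) := (contDiff_infty_iff_deriv.1 hu').2
  rw [iterated_neg (fun y => u y * deriv u y) n x, leibniz hu' hdu n x]
  have hconv : ∀ k ∈ range (n + 1),
      (n.choose k : ℝ) * (iteratedDeriv k u x * iteratedDeriv (n - k) (deriv u) x)
        = (n.choose k : ℝ) * (iteratedDeriv k u x * iteratedDeriv (n - k + 1) u x) := by
    intro k _
    rw [iteratedDeriv_succ' (n := n - k) (f := u)]
  rw [Finset.sum_congr rfl hconv, final_sum (fun k => iteratedDeriv k u x) n]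
  simp
end
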